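/- arXiv:2004.05356 — 4 statements merged into one kernel-verified Lean document; each statement's English description precedes it below -/
import Mathlib

section
/- Let r > 0 and let x, y be vectors in ℝ^d with |x| ≥ r, |y| ≥ r and |x - y| ≤ r. Then for every t ∈ [0,1], |t·x + (1-t)·y| ≥ (√3/2)·r. -/
/-! The squared norm of a convex combination is the mean of the squared norms minus the variance
term `t (1 - t) ‖x - y‖²`; with `t (1 - t) ≤ 1/4` this is at least `r² - r²/4 = 3r²/4`. -/

variable {F : Type*} [NormedAddCommGroup F] [InnerProductSpace ℝ F]

theorem norm_smul_add_one_sub_smul_sq (x y : F) (t : ℝ) :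
    ‖t • x + (1 - t) • y‖ ^ 2
      = t * ‖x‖ ^ 2 + (1 - t) * ‖y‖ ^ 2 - t * (1 - t) * ‖x - y‖ ^ 2 := by
  rw [norm_add_sq_real, norm_sub_sq_real, norm_smul, norm_smul, real_inner_smul_left,
    real_inner_smul_right, mul_pow, mul_pow, Real.norm_eq_abs, Real.norm_eq_abs, sq_abs, sq_abs]
  ring

theorem three_quarters_mul_sq_le_norm_smul_add_one_sub_smul_sq {r : ℝ} {x y : F}
    (hx : r ≤ ‖x‖) (hy : r ≤ ‖y‖) (hxy : ‖x - y‖ ≤ r) {t : ℝ} (ht : t ∈ Set.Icc (0 : ℝ) 1) :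
    3 / 4 * r ^ 2 ≤ ‖t • x + (1 - t) • y‖ ^ 2 := by
  obtain ⟨ht0, ht1⟩ := ht
  have hr : 0 ≤ r := (norm_nonneg _).trans hxy
  have hxr : r ^ 2 ≤ ‖x‖ ^ 2 := by gcongr
  have hyr : r ^ 2 ≤ ‖y‖ ^ 2 := by gcongr
  have hxyr : ‖x - y‖ ^ 2 ≤ r ^ 2 := by gcongr
  have hvar : t * (1 - t) ≤ 1 / 4 := by nlinarith [sq_nonneg (2 * t - 1)]
  rw [norm_smul_add_one_sub_smul_sq]
  calc 3 / 4 * r ^ 2 = t * r ^ 2 + (1 - t) * r ^ 2 - 1 / 4 * r ^ 2 := by ring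
    _ ≤ t * ‖x‖ ^ 2 + (1 - t) * ‖y‖ ^ 2 - t * (1 - t) * ‖x - y‖ ^ 2 := by
      gcongr

theorem convex_combination_norm_lower_bound_general
    (d : ℕ) (r : ℝ) (x y : EuclideanSpace ℝ (Fin d))
    (hx : r ≤ ‖x‖) (hy : r ≤ ‖y‖) (hxy : ‖x - y‖ ≤ r) :
    ∀ t ∈ Set.Icc (0 : ℝ) 1,
      Real.sqrt 3 / 2 * r ≤ ‖t • x + (1 - t) • y‖ := by
  intro t ht
  have hr : 0 ≤ r := (norm_nonneg _).trans hxy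
  have hsq : (Real.sqrt 3 / 2 * r) ^ 2 = 3 / 4 * r ^ 2 := by
    rw [mul_pow, div_pow, Real.sq_sqrt zero_le_three]
    ring
  refine (pow_le_pow_iff_left₀ (by positivity) (norm_nonneg _) two_ne_zero).1 ?_
  rw [hsq]
  exact three_quarters_mul_sq_le_norm_smul_add_one_sub_smul_sq hx hy hxy ht

/-- If `|x| ≥ r`, `|y| ≥ r` and `|x - y| ≤ r`, then every convex combination
`t•x + (1-t)•y` has norm at least `(√3/2)·r`. -/
theorem convex_combination_norm_lower_bound
    (d : ℕ) (r : ℝ) (hr : 0 < r) (x y : EuclideanSpace ℝ (Fin d))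
    (hx : r ≤ ‖x‖) (hy : r ≤ ‖y‖) (hxy : ‖x - y‖ ≤ r) :
    ∀ t ∈ Set.Icc (0 : ℝ) 1,
      Real.sqrt 3 / 2 * r ≤ ‖t • x + (1 - t) • y‖ :=
  convex_combination_norm_lower_bound_general d r x y hx hy hxy
end

section
/- Let λ, τ ∈ ℝ with λ < τ and set d := τ - λ > 0. Then for all β > 0, |(2/β)·log(1 - f_β(λ-τ)) - 2(λ - τ)| ≤ (2/β)·(1 - e^{-βd})^{-1}·e^{-βd}, where f_β(ε) = 1/(1+e^{βε}). -/
open Real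

-- For the Fermi function `f(x) = 1/(1 + eˣ)`, `1 - f(x) = eˣ/(1 + eˣ)`.
lemma log_one_sub_fermi (x : ℝ) :
    log (1 - 1 / (1 + exp x)) = x - log (1 + exp x) := by
  have hpos : 0 < 1 + exp x := by positivity
  have hfrac : 1 - 1 / (1 + exp x) = exp x / (1 + exp x) := by
    field_simp
    ring
  rw [hfrac, log_div (exp_pos x).ne' hpos.ne', log_exp]

lemma grand_potential_integrand_sub_eq {β : ℝ} (hβ : β ≠ 0) (ε : ℝ) :
    (2 / β) * log (1 - 1 / (1 + exp (β * ε))) - 2 * ε = -((2 / β) * log (1 + exp (β * ε))) := by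
  rw [log_one_sub_fermi]
  field_simp
  ring

lemma log_one_add_le_inv_one_sub_mul {t : ℝ} (ht₀ : 0 ≤ t) (ht₁ : t < 1) :
    log (1 + t) ≤ (1 - t)⁻¹ * t :=
  calc log (1 + t) ≤ 1 + t - 1 := log_le_sub_one_of_pos (by linarith)
    _ = t := by ring
    _ ≤ (1 - t)⁻¹ * t := le_mul_of_one_le_left ht₀ (one_le_inv₀ (by linarith) |>.2 (by linarith))

/-- Exponential convergence below the chemical potential: for `λ < τ`, `d = τ - λ`,
`|(2/β)·log(1 - f_β(λ-τ)) - 2(λ-τ)| ≤ (2/β)·(1 - e^{-βd})⁻¹·e^{-βd}`. -/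
theorem grand_potential_integrand_below (lam τ : ℝ) (h : lam < τ) (β : ℝ) (hβ : 0 < β) :
    |(2 / β) * Real.log (1 - 1 / (1 + Real.exp (β * (lam - τ)))) - 2 * (lam - τ)|
      ≤ (2 / β) * (1 - Real.exp (-(β * (τ - lam))))⁻¹ * Real.exp (-(β * (τ - lam))) := by
  set t := exp (-(β * (τ - lam)))
  have ht₀ : 0 < t := exp_pos _
  have ht₁ : t < 1 := exp_lt_one_iff.2 (neg_lt_zero.2 (mul_pos hβ (sub_pos.2 h)))
  have hexp : β * (lam - τ) = -(β * (τ - lam)) := by ring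
  rw [grand_potential_integrand_sub_eq hβ.ne', abs_neg, hexp,
    abs_of_nonneg (mul_nonneg (by positivity) (log_nonneg (by linarith))), mul_assoc]
  gcongr
  exact log_one_add_le_inv_one_sub_mul ht₀.le ht₁
end

section
/- Let λ_1 ≤ … ≤ λ_N be real numbers, let N_e ∈ (0, 2N), and let ε_F^β denote the unique solution τ of 2·Σ_s f_β(λ_s - τ) = N_e, where f_β(t) = 1/(1+e^{βt}). If ε is the unique point among the λ_s satisfying 2·#{s : λ_s < ε} + #{s : λ_s = ε} = N_e, then ε_F^β → ε as β → ∞. -/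
set_option maxHeartbeats 1000000

open Finset Filter Real

/-- Zero temperature limit of the Fermi level, first case: if `ε` is the unique
eigenvalue with `N^∞(ε) = N_e`, then the finite-temperature Fermi levels `ε_F^β`
converge to `ε` as `β → ∞`. -/
theorem fermi_level_zero_temp_limit_eigenvalue_case
    (N : ℕ) (lam : Fin N → ℝ) (hmono : Monotone lam)
    (Ne : ℝ) (hNe : Ne ∈ Set.Ioo (0 : ℝ) (2 * N))
    (Ninf : ℝ → ℝ)
    (hNinf : ∀ τ : ℝ, Ninf τ =
      2 * (Nat.card {s : Fin N // lam s < τ} : ℝ) +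
        (Nat.card {s : Fin N // lam s = τ} : ℝ))
    (ε : ℝ) (hεmem : ∃ s : Fin N, lam s = ε) (hεsol : Ninf ε = Ne)
    (huniq : ∀ s : Fin N, Ninf (lam s) = Ne → lam s = ε)
    (εF : ℝ → ℝ)
    (hεF : ∀ β : ℝ, 0 < β →
      2 * ∑ s, 1 / (1 + Real.exp (β * (lam s - εF β))) = Ne) :
    Filter.Tendsto εF Filter.atTop (nhds ε) := by
  classical
  have hNepos : 0 < Ne := hNe.1
  have hNreal : (0:ℝ) < N := by
    rcases hNe with ⟨h1, h2⟩; nlinarith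
  set A : Finset (Fin N) := Finset.univ.filter (fun s => lam s < ε) with hAdef
  set M : Finset (Fin N) := Finset.univ.filter (fun s => lam s = ε) with hMdef
  have hNe' : 2 * (A.card : ℝ) + (M.card : ℝ) = Ne := by
    have h := (hNinf ε).symm.trans hεsol
    rw [Nat.card_eq_fintype_card, Nat.card_eq_fintype_card,
      Fintype.card_subtype, Fintype.card_subtype] at h
    convert h using 3
  have hmpos : (1:ℝ) ≤ (M.card : ℝ) := by
    obtain ⟨s, hs⟩ := hεmem
    have hsM : s ∈ M := by simp [hMdef, hs]
    have : 0 < M.card := Finset.card_pos.mpr ⟨s, hsM⟩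
    exact_mod_cast this
  -- monotonicity of the Fermi sum in τ
  have Smono : ∀ β : ℝ, 0 < β → ∀ τ₁ τ₂ : ℝ, τ₁ ≤ τ₂ →
      (∑ s, 1 / (1 + Real.exp (β * (lam s - τ₁)))) ≤
        ∑ s, 1 / (1 + Real.exp (β * (lam s - τ₂))) := by
    intro β hβ τ₁ τ₂ h
    apply Finset.sum_le_sum
    intro s _
    apply one_div_le_one_div_of_le (by positivity)
    have h1 : β * (lam s - τ₂) ≤ β * (lam s - τ₁) := by nlinarith
    have := Real.exp_le_exp.mpr h1
    linarith
  -- lower bound at ε + δ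
  have boundA : ∀ δ : ℝ, 0 < δ → ∀ β : ℝ, 0 < β →
      Real.exp (-(β*δ)) * Ne < (M.card:ℝ) →
      Ne < 2 * ∑ s, 1 / (1 + Real.exp (β * (lam s - (ε+δ)))) := by
    intro δ hδ β hβ hE
    set E := Real.exp (-(β*δ)) with hEdef
    have hEpos : 0 < E := Real.exp_pos _
    have h1E : 0 < 1 + E := by linarith
    set L : Finset (Fin N) := Finset.univ.filter (fun s => lam s ≤ ε) with hLdef
    have hLcard : (L.card : ℝ) = (A.card : ℝ) + (M.card : ℝ) := by
      have hU : L = A ∪ M := by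
        ext s; simp [hLdef, hAdef, hMdef, le_iff_lt_or_eq]
      have hdisj : Disjoint A M := by
        rw [Finset.disjoint_left]
        intro s hsA hsM
        simp [hAdef] at hsA
        simp [hMdef] at hsM
        exact absurd hsM (ne_of_lt hsA)
      rw [hU, Finset.card_union_of_disjoint hdisj]
      push_cast; ring
    have hterm : ∀ s ∈ L, 1/(1+E) ≤ 1 / (1 + Real.exp (β * (lam s - (ε+δ)))) := by
      intro s hs
      have hsε : lam s ≤ ε := by simpa [hLdef] using hs
      apply one_div_le_one_div_of_le (by positivity)
      have h1 : β * (lam s - (ε+δ)) ≤ -(β*δ) := by nlinarith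
      have := Real.exp_le_exp.mpr h1
      linarith
    have hsum1 : (L.card : ℝ) * (1/(1+E)) ≤
        ∑ s ∈ L, 1 / (1 + Real.exp (β * (lam s - (ε+δ)))) := by
      calc (L.card : ℝ) * (1/(1+E)) = ∑ _s ∈ L, 1/(1+E) := by
            rw [Finset.sum_const, nsmul_eq_mul]
        _ ≤ _ := Finset.sum_le_sum hterm
    have hsum2 : (∑ s ∈ L, 1 / (1 + Real.exp (β * (lam s - (ε+δ))))) ≤
        ∑ s, 1 / (1 + Real.exp (β * (lam s - (ε+δ)))) := by
      apply Finset.sum_le_sum_of_subset_of_nonneg (Finset.subset_univ L)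
      intro s _ _
      positivity
    have key : Ne < 2 * ((L.card : ℝ) * (1/(1+E))) := by
      rw [hLcard]
      rw [show 2 * (((A.card:ℝ) + (M.card:ℝ)) * (1/(1+E)))
            = (2 * ((A.card:ℝ) + (M.card:ℝ))) / (1+E) by ring,
        lt_div_iff₀ h1E]
      nlinarith [hE, hNe']
    linarith
  -- upper bound at ε - δ
  have boundB : ∀ δ : ℝ, 0 < δ → ∀ β : ℝ, 0 < β →
      2 * (N:ℝ) * Real.exp (-(β*δ)) < (M.card:ℝ) →
      2 * (∑ s, 1 / (1 + Real.exp (β * (lam s - (ε-δ))))) < Ne := by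
    intro δ hδ β hβ hE
    set E := Real.exp (-(β*δ)) with hEdef
    have hEpos : 0 < E := Real.exp_pos _
    have hsplit := Finset.sum_filter_add_sum_filter_not Finset.univ
      (fun s => lam s < ε) (fun s => 1 / (1 + Real.exp (β * (lam s - (ε-δ)))))
    have hA1 : (∑ s ∈ A, 1 / (1 + Real.exp (β * (lam s - (ε-δ))))) ≤ (A.card : ℝ) := by
      calc (∑ s ∈ A, 1 / (1 + Real.exp (β * (lam s - (ε-δ)))))
          ≤ ∑ _s ∈ A, (1:ℝ) := by
            apply Finset.sum_le_sum
            intro s _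
            rw [div_le_one (by positivity)]
            linarith [Real.exp_pos (β * (lam s - (ε-δ)))]
        _ = (A.card : ℝ) := by simp
    have hA2 : (∑ s ∈ Finset.univ.filter (fun s => ¬ lam s < ε),
          1 / (1 + Real.exp (β * (lam s - (ε-δ))))) ≤ (N:ℝ) * E := by
      have hcard : ((Finset.univ.filter (fun s : Fin N => ¬ lam s < ε)).card : ℝ) ≤ (N:ℝ) := by
        have := Finset.card_filter_le (Finset.univ : Finset (Fin N)) (fun s => ¬ lam s < ε)
        have hN : (Finset.univ : Finset (Fin N)).card = N := by simp
        exact_mod_cast hN ▸ this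
      calc (∑ s ∈ Finset.univ.filter (fun s => ¬ lam s < ε),
            1 / (1 + Real.exp (β * (lam s - (ε-δ)))))
          ≤ ∑ _s ∈ Finset.univ.filter (fun s : Fin N => ¬ lam s < ε), E := by
            apply Finset.sum_le_sum
            intro s hs
            have hsε : ε ≤ lam s := not_lt.mp (by simpa using (Finset.mem_filter.mp hs).2)
            have h1 : β*δ ≤ β * (lam s - (ε-δ)) := by nlinarith
            calc 1 / (1 + Real.exp (β * (lam s - (ε-δ))))
                ≤ 1 / Real.exp (β * (lam s - (ε-δ))) := by
                  apply one_div_le_one_div_of_le (Real.exp_pos _)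
                  linarith
              _ = Real.exp (-(β * (lam s - (ε-δ)))) := by
                  rw [Real.exp_neg, one_div]
              _ ≤ E := Real.exp_le_exp.mpr (by linarith)
        _ = ((Finset.univ.filter (fun s : Fin N => ¬ lam s < ε)).card : ℝ) * E := by
            rw [Finset.sum_const, nsmul_eq_mul]
        _ ≤ (N:ℝ) * E := by
            apply mul_le_mul_of_nonneg_right hcard (le_of_lt hEpos)
    have htot : (∑ s, 1 / (1 + Real.exp (β * (lam s - (ε-δ)))))
        ≤ (A.card : ℝ) + (N:ℝ) * E := by
      rw [← hsplit]
      exact add_le_add hA1 hA2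
    linarith
  -- conclusion
  rw [Metric.tendsto_nhds]
  intro d hd
  have hexp : Tendsto (fun β : ℝ => Real.exp (-(β*d))) atTop (nhds 0) := by
    apply Real.tendsto_exp_atBot.comp
    have h1 : Tendsto (fun β : ℝ => β * d) atTop atTop :=
      Tendsto.atTop_mul_const hd tendsto_id
    exact tendsto_neg_atBot_iff.mpr h1
  have hmN : (0:ℝ) < (M.card:ℝ) := by linarith
  have h2N : (0:ℝ) < 2*(N:ℝ) := by linarith
  have ev1 : ∀ᶠ β in atTop, Real.exp (-(β*d)) * Ne < (M.card:ℝ) := by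
    have h := hexp.eventually_lt_const (div_pos hmN hNepos)
    filter_upwards [h] with β hb
    exact (lt_div_iff₀ hNepos).mp hb
  have ev2 : ∀ᶠ β in atTop, 2 * (N:ℝ) * Real.exp (-(β*d)) < (M.card:ℝ) := by
    have h := hexp.eventually_lt_const
      (show (0:ℝ) < (M.card:ℝ)/(2*(N:ℝ)) from div_pos hmN h2N)
    filter_upwards [h] with β hb
    rw [lt_div_iff₀ (by positivity)] at hb
    linarith
  filter_upwards [eventually_gt_atTop (0:ℝ), ev1, ev2] with β hβ h1 h2
  rw [Real.dist_eq, abs_sub_lt_iff]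
  have heq := hεF β hβ
  constructor
  · by_contra hcon
    push_neg at hcon
    have hmon := Smono β hβ (ε + d) (εF β) (by linarith)
    have hb := boundA d hd β hβ h1
    linarith
  · by_contra hcon
    push_neg at hcon
    have hmon := Smono β hβ (εF β) (ε - d) (by linarith)
    have hb := boundB d hd β hβ h2
    linarith
end

section
/- Let λ_1 ≤ … ≤ λ_N be real, N_e ∈ (0,2N), and suppose N^∞(λ_s) ≠ N_e for every s, where N^∞(τ) := 2·#{s: λ_s < τ} + #{s: λ_s = τ}. Let ε̲ < ε̄ be the adjacent eigenvalues with N^∞ ≤ N_e at ε̲ and N^∞ ≥ N_e at ε̄, and let ε_F^β solve 2Σ_s f_β(λ_s - ε_F^β) = N_e. If N^∞((ε̲+ε̄)/2) = N_e then ε_F^β → (ε̲+ε̄)/2 as β → ∞. -/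
/-!
Put `μ = (ε̲ + ε̄)/2`. Since no eigenvalue lies strictly inside the gap, `N^∞(μ) = N_e` says that
`N_e` is twice the number `k` of states below the gap, so the defining equation of `ε_F^β`
balances the particles above the gap against the holes below it. Each side is comparable, up to a
factor `N`, to the occupation of the gap edge: `f_β(ε̄ - ε_F^β)` resp. `f_β(ε_F^β - ε̲)`. Comparing
these two Fermi factors gives `β |ε_F^β - μ| ≤ log (2N)`.
-/

open Finset Filter

noncomputable section

def fermiDirac (u : ℝ) : ℝ := 1 / (1 + Real.exp u)

lemma fermiDirac_pos (u : ℝ) : 0 < fermiDirac u := by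
  unfold fermiDirac
  positivity

lemma fermiDirac_antitone : Antitone fermiDirac := fun _ _ huv =>
  one_div_le_one_div_of_le (by positivity) (by gcongr)

lemma fermiDirac_neg (u : ℝ) : fermiDirac (-u) = 1 - fermiDirac u := by
  unfold fermiDirac
  rw [Real.exp_neg]
  field_simp
  ring

lemma sub_le_two_mul_log_of_fermiDirac_le {x y n : ℝ} (hn : 1 ≤ n) (hxy : 0 ≤ x + y)
    (h : fermiDirac x ≤ n * fermiDirac y) : y - x ≤ 2 * Real.log (2 * n) := by
  rcases le_total y x with hyx | hxy'
  · linarith [Real.log_nonneg (by linarith : (1 : ℝ) ≤ 2 * n)]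
  have hcross : 1 + Real.exp y ≤ n * (1 + Real.exp x) := by
    rwa [fermiDirac, fermiDirac, mul_one_div, div_le_div_iff₀ (by positivity) (by positivity),
      one_mul] at h
  -- `1 + exp x ≤ 2 exp ((x + y) / 2)`, as `0` and `x` both lie below the midpoint of `x` and `y`
  have hsplit : Real.exp ((y - x) / 2) * Real.exp ((x + y) / 2)
      ≤ 2 * n * Real.exp ((x + y) / 2) := by
    rw [← Real.exp_add, show (y - x) / 2 + (x + y) / 2 = y by ring]
    have h0 : 1 ≤ Real.exp ((x + y) / 2) := Real.one_le_exp (by linarith)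
    have hx : Real.exp x ≤ Real.exp ((x + y) / 2) := Real.exp_le_exp.mpr (by linarith)
    nlinarith
  have := (Real.le_log_iff_exp_le (by linarith)).mpr
    (le_of_mul_le_mul_right hsplit (Real.exp_pos _))
  linarith

variable {ι : Type*} [Fintype ι]

lemma fermiDirac_le_sum_and_sum_le_card_mul {s : Finset ι} {x : ι → ℝ} {i₀ : ι} (hi₀ : i₀ ∈ s)
    (hmin : ∀ i ∈ s, x i₀ ≤ x i) :
    fermiDirac (x i₀) ≤ ∑ i ∈ s, fermiDirac (x i) ∧
      ∑ i ∈ s, fermiDirac (x i) ≤ Fintype.card ι * fermiDirac (x i₀) := by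
  refine ⟨single_le_sum (fun i _ => (fermiDirac_pos (x i)).le) hi₀, ?_⟩
  calc ∑ i ∈ s, fermiDirac (x i) ≤ #s * fermiDirac (x i₀) := by
        simpa using sum_le_card_nsmul s _ _ fun i hi => fermiDirac_antitone (hmin i hi)
    _ ≤ Fintype.card ι * fermiDirac (x i₀) := by
        gcongr
        · exact (fermiDirac_pos _).le
        · exact card_le_univ s

lemma sum_compl_fermiDirac_eq_sum_fermiDirac_neg [DecidableEq ι] {x : ι → ℝ} {s : Finset ι}
    (h : ∑ i, fermiDirac (x i) = #s) :
    ∑ i ∈ sᶜ, fermiDirac (x i) = ∑ i ∈ s, fermiDirac (-x i) := by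
  rw [← sum_compl_add_sum s] at h
  simp only [fermiDirac_neg, sum_sub_distrib, sum_const, nsmul_one]
  linarith

lemma abs_sub_midpoint_le_of_sum_fermiDirac_eq [DecidableEq ι] {e : ι → ℝ} {a b β ε : ℝ}
    (hab : a < b) (ha : ∃ i, e i = a) (hb : ∃ i, e i = b) (hgap : ∀ i, e i ≤ a ∨ b ≤ e i)
    (hβ : 0 < β) (hsum : ∑ i, fermiDirac (β * (e i - ε)) = #{i | e i ≤ a}) :
    |ε - (a + b) / 2| ≤ Real.log (2 * Fintype.card ι) / β := by
  obtain ⟨ia, rfl⟩ := ha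
  obtain ⟨ib, rfl⟩ := hb
  have hn : (1 : ℝ) ≤ Fintype.card ι := Nat.one_le_cast.mpr (Fintype.card_pos_iff.mpr ⟨ia⟩)
  set below : Finset ι := {i | e i ≤ e ia}
  have hbelow : ∀ i ∈ below, e i ≤ e ia := fun i hi => (mem_filter.mp hi).2
  have habove : ∀ i ∈ belowᶜ, e ib ≤ e i := fun i hi =>
    (hgap i).resolve_left fun h => mem_compl.mp hi (mem_filter.mpr ⟨mem_univ i, h⟩)
  have hbalance := sum_compl_fermiDirac_eq_sum_fermiDirac_neg hsum
  obtain ⟨hparticles_ge, hparticles_le⟩ :=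
    fermiDirac_le_sum_and_sum_le_card_mul (s := belowᶜ) (x := fun i => β * (e i - ε))
      (mem_compl.mpr fun h => (hbelow ib h).not_gt hab) fun i hi => by gcongr; exact habove i hi
  obtain ⟨hholes_ge, hholes_le⟩ :=
    fermiDirac_le_sum_and_sum_le_card_mul (s := below) (x := fun i => -(β * (e i - ε)))
      (mem_filter.mpr ⟨mem_univ ia, le_rfl⟩) fun i hi => by nlinarith [hbelow i hi]
  have hedges : 0 ≤ β * (e ib - ε) + -(β * (e ia - ε)) := by nlinarith
  have hup := sub_le_two_mul_log_of_fermiDirac_le hn hedges (by linarith)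
  have hdown := sub_le_two_mul_log_of_fermiDirac_le hn (add_comm (β * (e ib - ε)) _ ▸ hedges)
    (by linarith)
  rw [abs_sub_le_iff, le_div_iff₀ hβ, le_div_iff₀ hβ]
  constructor <;> linarith

lemma two_mul_card_lt_midpoint_add_card_eq_midpoint {e : ι → ℝ} {a b : ℝ} (hab : a < b)
    (hgap : ∀ i, e i ≤ a ∨ b ≤ e i) :
    2 * (Nat.card {i // e i < (a + b) / 2} : ℝ) + Nat.card {i // e i = (a + b) / 2}
      = 2 * #{i | e i ≤ a} := by
  have hlt : Nat.card {i // e i < (a + b) / 2} = #{i | e i ≤ a} := by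
    rw [Nat.card_eq_fintype_card, Fintype.card_subtype]
    congr 1
    ext i
    simp only [mem_filter, mem_univ, true_and]
    rcases hgap i with h | h <;> constructor <;> intro <;> linarith
  have heq : Nat.card {i // e i = (a + b) / 2} = 0 := by
    rw [Nat.card_eq_zero]
    refine Or.inl ⟨fun ⟨i, hi⟩ => ?_⟩
    rcases hgap i with h | h <;> linarith
  rw [hlt, heq]
  push_cast
  ring

end

theorem fermi_level_zero_temp_limit_midgap_case_general
    (N : ℕ) (lam : Fin N → ℝ)
    (Ne : ℝ)
    (Ninf : ℝ → ℝ)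
    (hNinf : ∀ τ : ℝ, Ninf τ =
      2 * (Nat.card {s : Fin N // lam s < τ} : ℝ) +
        (Nat.card {s : Fin N // lam s = τ} : ℝ))
    (εlo εhi : ℝ)
    (hlo_mem : ∃ s : Fin N, lam s = εlo) (hhi_mem : ∃ s : Fin N, lam s = εhi)
    (hlt : εlo < εhi)
    (hlo_max : ∀ s : Fin N, Ninf (lam s) ≤ Ne → lam s ≤ εlo)
    (hhi_min : ∀ s : Fin N, Ne ≤ Ninf (lam s) → εhi ≤ lam s)
    (hmid : Ninf ((εlo + εhi) / 2) = Ne)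
    (εF : ℝ → ℝ)
    (hεF : ∀ β : ℝ, 0 < β →
      2 * ∑ s, 1 / (1 + Real.exp (β * (lam s - εF β))) = Ne) :
    Filter.Tendsto εF Filter.atTop (nhds ((εlo + εhi) / 2)) := by
  have hgap : ∀ s, lam s ≤ εlo ∨ εhi ≤ lam s := fun s =>
    (lt_or_ge (Ninf (lam s)) Ne).imp (fun h => hlo_max s h.le) (hhi_min s)
  have hNe : Ne = 2 * #{s | lam s ≤ εlo} := by
    rw [← hmid, hNinf, two_mul_card_lt_midpoint_add_card_eq_midpoint hlt hgap]
  have hrate : ∀ β > 0, dist (εF β) ((εlo + εhi) / 2) ≤ Real.log (2 * N) / β := fun β hβ => by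
    have hsum : ∑ s, fermiDirac (β * (lam s - εF β)) = #{s | lam s ≤ εlo} := by
      have := hεF β hβ
      unfold fermiDirac
      linarith
    simpa [Real.dist_eq] using
      abs_sub_midpoint_le_of_sum_fermiDirac_eq hlt hlo_mem hhi_mem hgap hβ hsum
  rw [tendsto_iff_dist_tendsto_zero]
  refine squeeze_zero' (Eventually.of_forall fun _ => dist_nonneg)
    ((eventually_gt_atTop 0).mono hrate) ?_
  exact tendsto_const_nhds.div_atTop tendsto_id

/-- Zero temperature limit of the Fermi level, mid-gap case: if no eigenvalue solves
`N^∞(λ_s) = N_e`, `ε̲ < ε̄` are the adjacent eigenvalues enclosing the gap, and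
`N^∞((ε̲+ε̄)/2) = N_e`, then `ε_F^β → (ε̲+ε̄)/2` as `β → ∞`. -/
theorem fermi_level_zero_temp_limit_midgap_case
    (N : ℕ) (lam : Fin N → ℝ) (hmono : Monotone lam)
    (Ne : ℝ) (hNe : Ne ∈ Set.Ioo (0 : ℝ) (2 * N))
    (Ninf : ℝ → ℝ)
    (hNinf : ∀ τ : ℝ, Ninf τ =
      2 * (Nat.card {s : Fin N // lam s < τ} : ℝ) +
        (Nat.card {s : Fin N // lam s = τ} : ℝ))
    (hnot : ∀ s : Fin N, Ninf (lam s) ≠ Ne)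
    (εlo εhi : ℝ)
    (hlo_mem : ∃ s : Fin N, lam s = εlo) (hhi_mem : ∃ s : Fin N, lam s = εhi)
    (hlt : εlo < εhi)
    (hlo : Ninf εlo ≤ Ne) (hlo_max : ∀ s : Fin N, Ninf (lam s) ≤ Ne → lam s ≤ εlo)
    (hhi : Ne ≤ Ninf εhi) (hhi_min : ∀ s : Fin N, Ne ≤ Ninf (lam s) → εhi ≤ lam s)
    (hmid : Ninf ((εlo + εhi) / 2) = Ne)
    (εF : ℝ → ℝ)
    (hεF : ∀ β : ℝ, 0 < β →
      2 * ∑ s, 1 / (1 + Real.exp (β * (lam s - εF β))) = Ne) :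
    Filter.Tendsto εF Filter.atTop (nhds ((εlo + εhi) / 2)) :=
  fermi_level_zero_temp_limit_midgap_case_general N lam Ne Ninf hNinf εlo εhi hlo_mem hhi_mem hlt
    hlo_max hhi_min hmid εF hεF
end
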